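/- Let v_1, …, v_n be the vertex ordering in a 1-queue layout of a graph H, and let B_1, …, B_n be pairwise disjoint sets of vertices each of size at most ℓ. Let G be the graph with vertex set B_1 ∪ ⋯ ∪ B_n, where for each edge v_i v_j of H there is an edge between every vertex of B_i and every vertex of B_j. Then the vertex ordering of G obtained from v_1, …, v_n by replacing each v_i by the block B_i (ordered arbitrarily) admits an ℓ-queue layout of G. -/

import Mathlib

/-!
Common definitions for formalizing "Planar Graphs have Bounded Queue-Number"
(Dujmović, Joret, Micek, Morin, Ueckerdt, Wood).

All graphs are finite simple graphs (`SimpleGraph V` with `[Fintype V]`).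
-/

open Function

namespace QueuePaper

/-! ### Queue layouts -/

/-- Given a vertex ordering of `G` (an injection `f : V → ℕ`), this says the edges of `G`
can be partitioned into `k` queues with respect to this ordering, i.e. there is an
assignment `q` of edges to `{0, …, k-1}` such that no two edges in the same class are
nested. (Edges `vw` and `xy` are nested when `f v < f x < f y < f w`.) -/
def OrderingHasQueues {V : Type*} (G : SimpleGraph V) (f : V → ℕ) (k : ℕ) : Prop :=
  ∃ q : Sym2 V → ℕ,
    (∀ ⦃v w : V⦄, G.Adj v w → q s(v, w) < k) ∧
    ∀ ⦃v w x y : V⦄, G.Adj v w → G.Adj x y → q s(v, w) = q s(x, y) →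
      ¬(f v < f x ∧ f x < f y ∧ f y < f w)

/-- `G` has a `k`-queue layout: a linear ordering of the vertices together with a
partition of the edges into `k` queues. Equivalently, the queue-number of `G` is at
most `k`. -/
def HasQueueLayout {V : Type*} (G : SimpleGraph V) (k : ℕ) : Prop :=
  ∃ f : V → ℕ, Function.Injective f ∧ OrderingHasQueues G f k

/-! ### Layerings and partitions -/

/-- A layering of `G`, presented as the function sending each vertex to the index of its
layer: the endpoints of every edge lie in the same or in consecutive layers. -/
def IsLayering {V : Type*} (G : SimpleGraph V) (L : V → ℕ) : Prop :=
  ∀ ⦃v w : V⦄, G.Adj v w → L v ≤ L w + 1 ∧ L w ≤ L v + 1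

/-- A BFS layering of `G`: a root is chosen in each connected component and each vertex is
assigned the distance to the root of its component. -/
def IsBFSLayering {V : Type*} (G : SimpleGraph V) (L : V → ℕ) : Prop :=
  ∃ root : V → V,
    (∀ v, G.Reachable v (root v)) ∧
    (∀ ⦃v w : V⦄, G.Reachable v w → root v = root w) ∧
    ∀ v, L v = G.dist (root v) v

/-- An `H`-partition of `G`, presented as the function `P` sending each vertex of `G` to
the index (vertex of `H`) of its part: parts are non-empty (`P` is surjective) and for
every edge `vw` of `G`, either `v, w` lie in the same part or the parts of `v` and `w`
are adjacent in `H`. -/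
def IsHPartition {V X : Type*} (G : SimpleGraph V) (H : SimpleGraph X) (P : V → X) : Prop :=
  Function.Surjective P ∧ ∀ ⦃v w : V⦄, G.Adj v w → P v = P w ∨ H.Adj (P v) (P w)

/-- The partition (given by the fibres of) `P` has layered width at most `ℓ` with respect
to the layering `L`: every part has at most `ℓ` vertices in each layer. -/
def LayeredWidthLE {V X : Type*} (P : V → X) (L : V → ℕ) (ℓ : ℕ) : Prop :=
  ∀ (x : X) (i : ℕ), {v : V | P v = x ∧ L v = i}.ncard ≤ ℓ

/-- The quotient graph `G/P` of a partition of `G` given by the fibres of a surjection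
`P : V → X`: distinct parts are adjacent iff some vertex of one is adjacent in `G` to some
vertex of the other. -/
def quotientGraph {V X : Type*} (G : SimpleGraph V) (P : V → X) : SimpleGraph X where
  Adj x y := x ≠ y ∧ ∃ v w, G.Adj v w ∧ P v = x ∧ P w = y
  symm := by
    constructor
    rintro x y ⟨hxy, v, w, hvw, hv, hw⟩
    exact ⟨Ne.symm hxy, w, v, hvw.symm, hw, hv⟩
  loopless := by constructor; rintro x ⟨h, -⟩; exact h rfl

/-! ### Tree-decompositions and treewidth -/

/-- `(T, B)` is a tree-decomposition of `G`: `T` is a tree, for each vertex `v` of `G` the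
set of nodes of `T` whose bag contains `v` induces a non-empty connected subgraph
(subtree) of `T`, and each edge of `G` has both endpoints in some bag. -/
def IsTreeDecomp {V ι : Type*} (G : SimpleGraph V) (T : SimpleGraph ι) (B : ι → Set V) :
    Prop :=
  T.IsTree ∧
  (∀ v : V, (T.induce {x : ι | v ∈ B x}).Connected) ∧
  (∀ ⦃v w : V⦄, G.Adj v w → ∃ x, v ∈ B x ∧ w ∈ B x)

/-- `G` has treewidth at most `k`: it has a tree-decomposition with all bags of size at
most `k + 1`. -/
def TreewidthLE {V : Type*} (G : SimpleGraph V) (k : ℕ) : Prop :=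
  ∃ (ι : Type) (T : SimpleGraph ι) (B : ι → Set V),
    IsTreeDecomp G T B ∧ ∀ x, (B x).ncard ≤ k + 1

/-- `G` has layered treewidth at most `k`: it has a tree-decomposition and a layering such
that every bag has at most `k` vertices in each layer. -/
def LayeredTreewidthLE {V : Type*} (G : SimpleGraph V) (k : ℕ) : Prop :=
  ∃ (ι : Type) (T : SimpleGraph ι) (B : ι → Set V) (L : V → ℕ),
    IsTreeDecomp G T B ∧ IsLayering G L ∧
    ∀ (x : ι) (i : ℕ), {v : V | v ∈ B x ∧ L v = i}.ncard ≤ k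

/-! ### Combinatorial embeddings, Euler genus, planarity

Embeddings of graphs in surfaces are formalized combinatorially, via embedding schemes
(Heffter–Edmonds–Ringel): a rotation system (for each vertex, a cyclic ordering of the
darts leaving it) together with a signature on the edges. Faces are recovered as the
orbits of the face-tracing permutation on signed darts; each face corresponds to exactly
two orbits. For a connected graph, Euler's formula `n - m + f = 2 - g` determines the
Euler genus `g` of the embedding, and the Euler genus of a graph is the minimum over all
embedding schemes; a (possibly disconnected) graph embeds in a surface of Euler genus `g`
iff each of its components does. -/

/-- The face-tracing step of the embedding scheme `(ρ, σ)` on signed darts: having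
traversed dart `d` with current sign `s`, the sign becomes `s' = s * σ(d)` and the next
dart is obtained from the reversal of `d` by applying the rotation at its tail, forwards
or backwards according to `s'`. -/
def faceStep {V : Type*} (G : SimpleGraph V) (ρ : Equiv.Perm G.Dart) (σ : Sym2 V → Bool)
    (p : G.Dart × Bool) : G.Dart × Bool :=
  ((if (p.2 == σ p.1.edge) then ρ p.1.symm else ρ.symm p.1.symm), p.2 == σ p.1.edge)

/-- `ρ` is a rotation system on `G`: a permutation of the darts preserving tails and
acting as a single cycle on the darts at each vertex (a cyclic ordering of the darts
leaving each vertex). -/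
def IsRotation {V : Type*} (G : SimpleGraph V) (ρ : Equiv.Perm G.Dart) : Prop :=
  (∀ d : G.Dart, (ρ d).fst = d.fst) ∧
  (∀ d e : G.Dart, d.fst = e.fst → ∃ n : ℕ, (⇑ρ)^[n] d = e)

/-- The embedding scheme `(ρ, σ)` of `G` has Euler genus at most `g`: each connected
component `C` (containing at least one edge) satisfies Euler's inequality
`2 - (n_C - m_C + f_C) ≤ g`, written below with the number of darts of `C`
(which is `2 m_C`) and the number of orbits on signed darts of the face-tracing
permutation restricted to `C` (which is `2 f_C`). -/
def SchemeGenusLE {V : Type*} (G : SimpleGraph V) (ρ : Equiv.Perm G.Dart)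
    (σ : Sym2 V → Bool) (g : ℕ) : Prop :=
  ∀ C : G.ConnectedComponent,
    (∃ d : G.Dart, G.connectedComponentMk d.fst = C) →
    4 + Nat.card {d : G.Dart // G.connectedComponentMk d.fst = C}
      ≤ 2 * g + 2 * Nat.card {v : V // G.connectedComponentMk v = C}
        + Nat.card (Quot (fun a b : {p : G.Dart × Bool // G.connectedComponentMk p.1.fst = C} =>
            faceStep G ρ σ a.val = b.val))

/-- `G` has Euler genus at most `g`: it embeds in a surface of Euler genus at most `g`,
i.e. it has an embedding scheme of Euler genus at most `g`. -/
def EulerGenusLE {V : Type*} (G : SimpleGraph V) (g : ℕ) : Prop :=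
  ∃ (ρ : Equiv.Perm G.Dart) (σ : Sym2 V → Bool), IsRotation G ρ ∧ SchemeGenusLE G ρ σ g

/-- `G` is planar: it embeds in the sphere (Euler genus 0). -/
def IsPlanar {V : Type*} (G : SimpleGraph V) : Prop := EulerGenusLE G 0

/-- `G` is apex: deleting at most one vertex makes it planar. -/
def IsApex {V : Type*} (G : SimpleGraph V) : Prop :=
  ∃ S : Set V, S.ncard ≤ 1 ∧ IsPlanar (G.induce Sᶜ)

/-- `G` together with one new dominant (apex) vertex. -/
def addApex {V : Type*} (G : SimpleGraph V) : SimpleGraph (Option V) where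
  Adj a b := (a = none ∧ ∃ w, b = some w) ∨ (b = none ∧ ∃ v, a = some v) ∨
    (∃ v w, a = some v ∧ b = some w ∧ G.Adj v w)
  symm := by
    constructor
    rintro a b (⟨rfl, w, rfl⟩ | ⟨rfl, v, rfl⟩ | ⟨v, w, rfl, rfl, h⟩)
    · exact Or.inr (Or.inl ⟨rfl, w, rfl⟩)
    · exact Or.inl ⟨rfl, v, rfl⟩
    · exact Or.inr (Or.inr ⟨w, v, rfl, rfl, h.symm⟩)
  loopless := by
    constructor
    rintro a (⟨rfl, w, h⟩ | ⟨rfl, v, h⟩ | ⟨v, w, rfl, h2, h⟩)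
    · exact Option.some_ne_none _ h.symm
    · exact Option.some_ne_none _ h.symm
    · obtain rfl : v = w := by injection h2
      exact G.loopless.irrefl v h

/-- `G` is outerplanar: it has a planar embedding with all vertices on the outer face;
equivalently (and this is the formal definition used here), adding one new vertex
adjacent to all vertices of `G` yields a planar graph. -/
def IsOuterplanar {V : Type*} (G : SimpleGraph V) : Prop := IsPlanar (addApex G)

/-- `G` is a planar triangulation: a connected graph with a planar embedding scheme
(Euler's formula for genus 0 holds, written with darts and face-tracing orbits as in
`SchemeGenusLE`) in which every facial walk has length 3, i.e. every face (including the
outer face) is a triangle. -/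
def IsPlanarTriangulation {V : Type*} (G : SimpleGraph V) : Prop :=
  G.Connected ∧
  ∃ (ρ : Equiv.Perm G.Dart) (σ : Sym2 V → Bool),
    IsRotation G ρ ∧
    (∀ p : G.Dart × Bool, (faceStep G ρ σ)^[3] p = p) ∧
    4 + Nat.card G.Dart
      = 2 * Nat.card V + Nat.card (Quot (fun a b : G.Dart × Bool => faceStep G ρ σ a = b))

/-! ### Vertical paths and tripods -/

/-- `S` is (the vertex set of) a vertical path in the tree `T` rooted at `r`: a non-empty
path in `T` whose vertices have pairwise distinct distances from the root (so distances
along the path are `d+1, d+2, …, d+p` for some `d`). -/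
def IsVerticalPath {V : Type*} (T : SimpleGraph V) (r : V) (S : Set V) : Prop :=
  S.Nonempty ∧ (T.induce S).Connected ∧ Set.InjOn (T.dist r) S

/-- `S` is (the vertex set of) a tripod in the spanning tree `T` (rooted at `r`) of `G`:
the union of up to three pairwise disjoint vertical paths in `T` whose lower endpoints
(the endpoints farthest from the root) form a clique in `G`. -/
def IsTripod {V : Type*} (G T : SimpleGraph V) (r : V) (S : Set V) : Prop :=
  ∃ P : Fin 3 → Set V,
    S = P 0 ∪ P 1 ∪ P 2 ∧
    (∀ i j, i ≠ j → Disjoint (P i) (P j)) ∧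
    (∀ i, P i = ∅ ∨ IsVerticalPath T r (P i)) ∧
    ∃ low : Fin 3 → V,
      (∀ i, (P i).Nonempty → low i ∈ P i ∧ ∀ x ∈ P i, T.dist r x ≤ T.dist r (low i)) ∧
      ∀ i j, i ≠ j → (P i).Nonempty → (P j).Nonempty → G.Adj (low i) (low j)

/-! ### Minors -/

/-- `H` is a minor of `G`: there is a family of non-empty, connected, pairwise disjoint
branch sets in `G`, indexed by the vertices of `H`, with an edge of `G` between the branch
sets corresponding to each edge of `H`. -/
def IsMinor {α β : Type*} (H : SimpleGraph α) (G : SimpleGraph β) : Prop :=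
  ∃ B : α → Set β,
    (∀ x, (B x).Nonempty) ∧
    (∀ x, (G.induce (B x)).Connected) ∧
    (∀ x y, x ≠ y → Disjoint (B x) (B y)) ∧
    ∀ ⦃x y⦄, H.Adj x y → ∃ u ∈ B x, ∃ v ∈ B y, G.Adj u v

/-! ### Strong products and subgraph embeddings -/

/-- The strong product `A ⊠ B`. -/
def strongProd {α β : Type*} (A : SimpleGraph α) (B : SimpleGraph β) :
    SimpleGraph (α × β) where
  Adj p q := p ≠ q ∧ (p.1 = q.1 ∨ A.Adj p.1 q.1) ∧ (p.2 = q.2 ∨ B.Adj p.2 q.2)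
  symm := by
    constructor
    rintro p q ⟨hne, h1, h2⟩
    exact ⟨hne.symm, Or.imp (fun h => h.symm) (fun h => h.symm) h1,
      Or.imp (fun h => h.symm) (fun h => h.symm) h2⟩
  loopless := ⟨fun p h => h.1 rfl⟩

/-- `G` is (isomorphic to) a subgraph of `G'`. -/
def EmbedsIn {α β : Type*} (G : SimpleGraph α) (G' : SimpleGraph β) : Prop :=
  ∃ f : α → β, Function.Injective f ∧ ∀ ⦃v w⦄, G.Adj v w → G'.Adj (f v) (f w)

end QueuePaper

/-!
An ordering admits a `k`-queue layout as soon as it contains no `k + 1` pairwise nested edges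
(a `(k+1)`-rainbow; Heath–Rosenberg): put each edge in the queue numbered one less than the size
of the largest rainbow having it as outermost edge. In the blow-up, two nested edges of `G` cannot
have nested images in `H`, so they share their left block or their right block. Hence all edges
of a rainbow share one left block or all share one right block, and their distinct endpoints
in that block number at most `ℓ`.
-/

lemma forall_eq_or_forall_eq_of_forall_eq_or_eq {ι X Y : Type*} {a : ι → X} {b : ι → Y}
    (h : ∀ i j, a i = a j ∨ b i = b j) : (∀ i j, a i = a j) ∨ ∀ i j, b i = b j := by
  by_contra! ⟨⟨i, j, hij⟩, k, l, hkl⟩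
  -- every `m` differs from `i` or from `j` in `a`, so agrees with both in `b`
  have hb : ∀ m, b m = b i := fun m => by
    rcases h m i with hmi | hmi
    · exact ((h m j).resolve_left fun hmj => hij (hmi.symm.trans hmj)).trans
        ((h i j).resolve_left hij).symm
    · exact hmi
  exact hkl ((hb k).trans (hb l).symm)

lemma nat_card_le_of_injective_into_fiber {V X ι : Type*} [Finite V] {β : V → X} {ℓ : ℕ}
    (hβ : ∀ x : X, {v : V | β v = x}.ncard ≤ ℓ) {u : ι → V} (hu : Function.Injective u)
    (hconst : ∀ i j, β (u i) = β (u j)) : Nat.card ι ≤ ℓ := by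
  rcases isEmpty_or_nonempty ι with hι | ⟨⟨i⟩⟩
  · simp
  calc Nat.card ι = (Set.range u).ncard := (Set.ncard_range_of_injective hu).symm
    _ ≤ {v : V | β v = β (u i)}.ncard :=
      Set.ncard_le_ncard (by rintro _ ⟨j, rfl⟩; exact hconst j i)
    _ ≤ ℓ := hβ _

namespace QueuePaper

variable {V : Type*}

/-- A rainbow of size `n` in the ordering `g`, indexed from the outside in:
`v 0 ≺ v 1 ≺ ⋯ ≺ v (n-1) ≺ w (n-1) ≺ ⋯ ≺ w 1 ≺ w 0`. -/
def IsRainbow (G : SimpleGraph V) (g : V → ℕ) {n : ℕ} (v w : Fin n → V) : Prop :=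
  (∀ i, G.Adj (v i) (w i) ∧ g (v i) < g (w i)) ∧ StrictMono (g ∘ v) ∧ StrictAnti (g ∘ w)

namespace IsRainbow

variable {G : SimpleGraph V} {g : V → ℕ}

lemma single {a b : V} (hab : G.Adj a b) (hg : g a < g b) : IsRainbow G g ![a] ![b] :=
  ⟨fun i => by fin_cases i; exact ⟨hab, hg⟩, Subsingleton.strictMono _, Subsingleton.strictAnti _⟩

lemma cons {n : ℕ} {v w : Fin (n + 1) → V} (h : IsRainbow G g v w) {a b : V} (hab : G.Adj a b)
    (ha : g a < g (v 0)) (hb : g (w 0) < g b) :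
    IsRainbow G g (Matrix.vecCons a v) (Matrix.vecCons b w) := by
  obtain ⟨hedge, hv, hw⟩ := h
  refine ⟨Fin.cases ⟨hab, ha.trans ((hedge 0).2.trans hb)⟩ hedge, ?_, ?_⟩
  · show StrictMono (g ∘ Fin.cons a v)
    rw [Fin.comp_cons]
    exact hv.vecCons ha
  · show StrictAnti (g ∘ Fin.cons b w)
    rw [Fin.comp_cons]
    exact hw.vecCons hb

end IsRainbow

variable {G : SimpleGraph V} {g : V → ℕ}

lemma exists_isRainbow_one (hg : Function.Injective g) {a b : V} (hab : G.Adj a b) :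
    ∃ v w : Fin 1 → V, IsRainbow G g v w ∧ s(v 0, w 0) = s(a, b) := by
  rcases (hg.ne hab.ne).lt_or_gt with hlt | hgt
  · exact ⟨![a], ![b], .single hab hlt, rfl⟩
  · exact ⟨![b], ![a], .single hab.symm hgt, Sym2.eq_swap⟩

theorem orderingHasQueues_of_isRainbow_le (hg : Function.Injective g) (k : ℕ)
    (hrainbow : ∀ (n : ℕ) (v w : Fin n → V), IsRainbow G g v w → n ≤ k) :
    OrderingHasQueues G g k := by
  classical
  let P : Sym2 V → ℕ → Prop := fun e m =>
    ∃ v w : Fin (m + 1) → V, IsRainbow G g v w ∧ s(v 0, w 0) = e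
  have hP : ∀ ⦃a b : V⦄, G.Adj a b → P s(a, b) (Nat.findGreatest (P s(a, b)) k) :=
    fun a b hab => Nat.findGreatest_spec (Nat.zero_le k) (exists_isRainbow_one hg hab)
  refine ⟨fun e => Nat.findGreatest (P e) k, fun a b hab => ?_, ?_⟩
  · obtain ⟨v, w, hvw, -⟩ := hP hab
    exact hrainbow _ v w hvw
  · rintro a b c d hab hcd hq ⟨hac, hcd', hdb⟩
    obtain ⟨v, w, hvw, hvw0⟩ := hP hcd
    obtain ⟨hv0, hw0⟩ : v 0 = c ∧ w 0 = d := by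
      refine (Sym2.eq_iff.mp hvw0).resolve_right fun ⟨hv0, hw0⟩ => ?_
      exact (hvw.1 0).2.not_gt (by rwa [hv0, hw0])
    have houter := hvw.cons hab (by rwa [hv0]) (by rwa [hw0])
    have hle : Nat.findGreatest (P s(c, d)) k + 1 ≤ Nat.findGreatest (P s(a, b)) k :=
      Nat.le_findGreatest (Nat.le_of_succ_le (hrainbow _ _ _ houter)) ⟨_, _, houter, rfl⟩
    exact hle.not_gt (Nat.lt_succ_of_le hq.le)

lemma IsRainbow.left_block_eq_or_right_block_eq {X : Type*} {H : SimpleGraph X} {f : X → ℕ}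
    {β : V → X}
    (hH1 : ∀ ⦃v w x y : X⦄, H.Adj v w → H.Adj x y → ¬(f v < f x ∧ f x < f y ∧ f y < f w))
    (hG : ∀ v w : V, G.Adj v w ↔ H.Adj (β v) (β w))
    (hcompat : ∀ v w : V, β v ≠ β w → (g v < g w ↔ f (β v) < f (β w)))
    {n : ℕ} {v w : Fin n → V} (h : IsRainbow G g v w) (i j : Fin n) :
    β (v i) = β (v j) ∨ β (w i) = β (w j) := by
  wlog hij : i < j generalizing i j
  · rcases (not_lt.mp hij).eq_or_lt with rfl | hji
    · exact Or.inl rfl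
    · exact (this j i hji).imp Eq.symm Eq.symm
  by_contra! ⟨hv, hw⟩
  have hHj := (hG _ _).mp (h.1 j).1
  exact hH1 ((hG _ _).mp (h.1 i).1) hHj
    ⟨(hcompat _ _ hv).mp (h.2.1 hij), (hcompat _ _ hHj.ne).mp (h.1 j).2,
      (hcompat _ _ (Ne.symm hw)).mp (h.2.2 hij)⟩

end QueuePaper

open QueuePaper in
theorem blowup_queue_general {X V : Type} [Fintype V]
    (H : SimpleGraph X) (f : X → ℕ)
    (hH1 : ∀ ⦃v w x y : X⦄, H.Adj v w → H.Adj x y →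
      ¬(f v < f x ∧ f x < f y ∧ f y < f w))
    (ℓ : ℕ) (β : V → X) (hβ : ∀ x : X, {v : V | β v = x}.ncard ≤ ℓ)
    (G : SimpleGraph V) (hG : ∀ v w : V, G.Adj v w ↔ H.Adj (β v) (β w))
    (g : V → ℕ) (hg : Function.Injective g)
    (hcompat : ∀ v w : V, β v ≠ β w → (g v < g w ↔ f (β v) < f (β w))) :
    OrderingHasQueues G g ℓ := by
  refine orderingHasQueues_of_isRainbow_le hg ℓ fun n v w hvw => ?_
  rw [← Nat.card_fin n]
  rcases forall_eq_or_forall_eq_of_forall_eq_or_eq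
      (hvw.left_block_eq_or_right_block_eq hH1 hG hcompat) with hv | hw
  · exact nat_card_le_of_injective_into_fiber hβ hvw.2.1.injective.of_comp hv
  · exact nat_card_le_of_injective_into_fiber hβ hvw.2.2.injective.of_comp hw

open QueuePaper in
/-- The blow-up lemma for queue layouts: let `f` be the vertex ordering of a 1-queue
layout of `H` (no two edges of `H` are nested in `f`). Let the vertices of `G` be
grouped into pairwise disjoint blocks indexed by the vertices of `H` (vertex `v` of `G`
lies in block `β v`), each block of size at most `ℓ`, and let the edges of `G` be exactly
all pairs joining two blocks corresponding to an edge of `H`. Then any vertex ordering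
`g` of `G` obtained from `f` by replacing each vertex of `H` by its block (ordered
arbitrarily) admits an `ℓ`-queue layout of `G`. -/
theorem blowup_queue {X V : Type} [Fintype X] [Fintype V]
    (H : SimpleGraph X) (f : X → ℕ) (hf : Function.Injective f)
    (hH1 : ∀ ⦃v w x y : X⦄, H.Adj v w → H.Adj x y →
      ¬(f v < f x ∧ f x < f y ∧ f y < f w))
    (ℓ : ℕ) (β : V → X) (hβ : ∀ x : X, {v : V | β v = x}.ncard ≤ ℓ)
    (G : SimpleGraph V) (hG : ∀ v w : V, G.Adj v w ↔ H.Adj (β v) (β w))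
    (g : V → ℕ) (hg : Function.Injective g)
    (hcompat : ∀ v w : V, β v ≠ β w → (g v < g w ↔ f (β v) < f (β w))) :
    OrderingHasQueues G g ℓ :=
  blowup_queue_general H f hH1 ℓ β hβ G hG g hg hcompat
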